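/- Tightness of the tightened value-function bound (claim of Section 4.2.3 of the paper): for every follower schedule z* ∈ 𝒮 and every leader schedule y ∈ 𝒮, the tightened value-function bound of z* evaluated at y equals the follower's profit with schedule z* against y, i.e., Φ_tight(y) = π^F(y,z*). In particular, the tightened cut provides a tight lower bound on the profit of the follower with location schedule z* against any location schedule y of the leader. -/

import Mathlib

open Finset

attribute [local instance] Classical.propDecidable

/-- Data of an instance of the competitive dynamic facility location problem under
cumulative customer demand (CDFLP-CCD).  `pref j a b` means that customer `j`
strictly prefers option `a` over option `b`, where `none` is the no-service option. -/
structure CDFLP (I J : Type*) where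
  /-- number of time periods; the period set is `{1, …, T}` -/
  T : ℕ
  /-- spawning demand of customer `j` at period `t` -/
  d : J → ℕ → ℝ
  /-- reward per unit of demand captured at location `i` -/
  r : I → ℝ
  /-- splitting factor -/
  ρ : ℝ
  /-- strict preference: `pref j a b` means `a ≻_j b` -/
  pref : J → Option I → Option I → Prop

namespace CDFLP

variable {I J : Type*} [Fintype I] [Fintype J]

/-- The model hypotheses: `T ≥ 1`, nonnegative demands and rewards, `ρ ∈ [0,1]`,
and every `≻_j` is a strict linear order on `I ∪ {0}`. -/
def Valid (P : CDFLP I J) : Prop :=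
  1 ≤ P.T ∧ (∀ j t, 0 ≤ P.d j t) ∧ (∀ i, 0 ≤ P.r i) ∧
    0 ≤ P.ρ ∧ P.ρ ≤ 1 ∧ ∀ j, IsStrictTotalOrder (Option I) (P.pref j)

/-- The locations considered by customer `j`, i.e. those preferred over no service. -/
noncomputable def considered (P : CDFLP I J) (j : J) : Finset I :=
  Finset.univ.filter fun i => P.pref j (some i) none

/-- `w` is a location schedule: on the planning horizon it is `{0,1}`-valued and opens
at most one facility per period. -/
def IsSched (P : CDFLP I J) (w : I → ℕ → ℝ) : Prop :=
  ∀ t, 1 ≤ t → t ≤ P.T → (∀ i, w i t = 0 ∨ w i t = 1) ∧ (∑ i, w i t) ≤ 1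

/-- `A_j^t(y,z)`: considered locations of `j` opened by the leader or the follower
at period `t`. -/
noncomputable def captureSet (P : CDFLP I J) (y z : I → ℕ → ℝ) (j : J) (t : ℕ) : Finset I :=
  Finset.univ.filter fun i => P.pref j (some i) none ∧ (y i t = 1 ∨ z i t = 1)

/-- `t ∈ 𝒯` is a capture period of customer `j`. -/
def IsCapture (P : CDFLP I J) (y z : I → ℕ → ℝ) (j : J) (t : ℕ) : Prop :=
  1 ≤ t ∧ t ≤ P.T ∧ (P.captureSet y z j t).Nonempty

/-- `i` is the `≻_j`-greatest element of the capture set `A_j^t(y,z)`,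
i.e. `i = i*(j,t)`. -/
def IsPatron (P : CDFLP I J) (y z : I → ℕ → ℝ) (j : J) (t : ℕ) (i : I) : Prop :=
  i ∈ P.captureSet y z j t ∧
    ∀ k ∈ P.captureSet y z j t, k ≠ i → P.pref j (some i) (some k)

/-- The greatest capture period of `j` smaller than `t` (`0` if there is none). -/
noncomputable def lastCap (P : CDFLP I J) (y z : I → ℕ → ℝ) (j : J) (t : ℕ) : ℕ :=
  ((Finset.Ico 1 t).filter fun s => P.IsCapture y z j s).sup id

/-- `D_j^{ℓt}`: demand of customer `j` spawned in periods `ℓ+1, …, t`. -/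
noncomputable def D (P : CDFLP I J) (j : J) (ℓ t : ℕ) : ℝ :=
  ∑ s ∈ Finset.Icc (ℓ + 1) t, P.d j s

/-- `v_{ij}^{ℓt}(y,z)`: fraction of `D_j^{ℓt}` captured by the follower through
location `i` at period `t`. -/
noncomputable def v (P : CDFLP I J) (y z : I → ℕ → ℝ) (j : J) (i : I) (ℓ t : ℕ) : ℝ :=
  if P.IsCapture y z j t ∧ ℓ = P.lastCap y z j t ∧ P.IsPatron y z j t i ∧ z i t = 1 then
    1 - P.ρ * y i t
  else 0

/-- `u_{ij}^{ℓt}(y,z)`: fraction of `D_j^{ℓt}` captured by the leader through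
location `i` at period `t`. -/
noncomputable def u (P : CDFLP I J) (y z : I → ℕ → ℝ) (j : J) (i : I) (ℓ t : ℕ) : ℝ :=
  if P.IsCapture y z j t ∧ ℓ = P.lastCap y z j t ∧ P.IsPatron y z j t i ∧ y i t = 1 then
    1 - (1 - P.ρ) * z i t
  else 0

/-- The follower's profit `π^F(y,z)`. -/
noncomputable def profitF (P : CDFLP I J) (y z : I → ℕ → ℝ) : ℝ :=
  ∑ t ∈ Finset.Icc 1 P.T, ∑ ℓ ∈ Finset.range t, ∑ j : J, ∑ i ∈ P.considered j,
    P.r i * P.D j ℓ t * P.v y z j i ℓ t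

/-- The leader's profit `π^L(y,z)`. -/
noncomputable def profitL (P : CDFLP I J) (y z : I → ℕ → ℝ) : ℝ :=
  ∑ t ∈ Finset.Icc 1 P.T, ∑ ℓ ∈ Finset.range t, ∑ j : J, ∑ i ∈ P.considered j,
    P.r i * P.D j ℓ t * P.u y z j i ℓ t

/-- `(y,z)` is bilevel feasible: both are schedules and `z` is an optimal
reaction of the follower against `y`. -/
def BilevelFeasible (P : CDFLP I J) (y z : I → ℕ → ℝ) : Prop :=
  P.IsSched y ∧ P.IsSched z ∧ ∀ z', P.IsSched z' → P.profitF y z' ≤ P.profitF y z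


/-- `o_{ij}^{st}(y)`: the maximum of the `y`-values at locations/periods through which
the leader can intercept the demand portion spawned at period `s` and captured at
period `t` through location `i`; the maximum of an empty set is taken as `0`. -/
noncomputable def oMax (P : CDFLP I J) (y : I → ℕ → ℝ) (j : J) (i : I) (s t : ℕ) : ℝ :=
  max ((Finset.Ico s t ×ˢ P.considered j).fold max 0 fun p => y p.2 p.1)
      ((Finset.univ.filter fun k => P.pref j (some k) (some i)).fold max 0 fun k => y k t)

/-- The tightened value-function bound of the follower schedule `zs`, evaluated at a
leader schedule `y` (the `v`-values are taken against the empty leader schedule). -/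
noncomputable def tightenedBound (P : CDFLP I J) (zs y : I → ℕ → ℝ) : ℝ :=
  ∑ t ∈ Finset.Icc 1 P.T, ∑ ℓ ∈ Finset.range t, ∑ j : J, ∑ i ∈ P.considered j,
    P.r i * P.v (fun _ _ => 0) zs j i ℓ t *
      (P.D j ℓ t - (∑ s ∈ Finset.Icc (ℓ + 1) t, P.d j s * P.oMax y j i s t)
        - P.ρ * y i t * ∑ s ∈ Finset.Icc (ℓ + 1) t, P.d j s * (1 - P.oMax y j i s t))

end CDFLP

/-!
Both sides split into terms indexed by a period `t`, a customer `j` and a location `i`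
opened by the follower at `t` (all other terms vanish). Against the empty leader, `i`
captures `j` at `t` and collects the demand spawned since `ℓ₀`, the last earlier period in
which the follower alone captures `j`; against `y` it collects, if anything, the demand
spawned since the last capture period `ℓ₁ ≥ ℓ₀`. If the leader opens at `t` a location
that `j` prefers to `i`, then `o^{st} = 1` for all `s` and both terms are zero. Otherwise
`o^{st} = 1` exactly when `s ≤ ℓ₁` (a leader facility in `[s, t)` is then the capture at
`ℓ₁`), so the bound collapses to `(1 - ρ y(i,t)) D^{ℓ₁t}`, the follower's profit term.
-/

lemma Finset.fold_max_zero_eq_ite {α : Type*} {s : Finset α} {f : α → ℝ}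
    (hf : ∀ x ∈ s, f x = 0 ∨ f x = 1) :
    s.fold max 0 f = if ∃ x ∈ s, f x = 1 then 1 else 0 := by
  split_ifs with h
  · obtain ⟨x, hx, hfx⟩ := h
    refine le_antisymm ((fold_max_le _).2 ⟨zero_le_one, fun y hy => ?_⟩)
      ((le_fold_max _).2 (Or.inr ⟨x, hx, hfx.ge⟩))
    rcases hf y hy with h | h <;> simp [h]
  · refine le_antisymm ((fold_max_le _).2 ⟨le_rfl, fun y hy => ?_⟩)
      ((le_fold_max _).2 (Or.inl le_rfl))
    exact ((hf y hy).resolve_right fun h1 => h ⟨y, hy, h1⟩).le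

lemma max_ite_one_zero (p q : Prop) [Decidable p] [Decidable q] :
    max (if p then (1 : ℝ) else 0) (if q then 1 else 0) = if p ∨ q then 1 else 0 := by
  split_ifs <;> simp_all

namespace CDFLP

variable {I J : Type*} [Fintype I] {P : CDFLP I J}
variable {y z w : I → ℕ → ℝ} {j : J} {i k : I} {s t : ℕ}

lemma IsSched.eq_of_apply_eq_one (hw : P.IsSched w)
    (h1 : 1 ≤ t) (h2 : t ≤ P.T) (hi : w i t = 1) (hk : w k t = 1) : i = k := by
  by_contra hne
  have hsub : ∑ x ∈ {i, k}, w x t ≤ ∑ x, w x t :=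
    sum_le_sum_of_subset_of_nonneg (subset_univ _)
      fun x _ _ => by rcases (hw t h1 h2).1 x with h | h <;> simp [h]
  rw [sum_pair hne, hi, hk] at hsub
  linarith [(hw t h1 h2).2]

lemma mem_captureSet :
    i ∈ P.captureSet y z j t ↔ P.pref j (some i) none ∧ (y i t = 1 ∨ z i t = 1) := by
  simp [captureSet]

lemma mem_considered : i ∈ P.considered j ↔ P.pref j (some i) none := by
  simp [considered]

lemma IsCapture.of_zero_left (h : P.IsCapture (fun _ _ => 0) z j t) : P.IsCapture y z j t := by
  obtain ⟨h1, h2, i, hi⟩ := h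
  rw [mem_captureSet] at hi
  exact ⟨h1, h2, i, mem_captureSet.2 ⟨hi.1, Or.inr (hi.2.resolve_left zero_ne_one)⟩⟩

lemma lastCap_lt (ht : 1 ≤ t) : P.lastCap y z j t < t :=
  (Finset.sup_lt_iff (by rw [Nat.bot_eq_zero]; omega)).2
    fun _ hs => (mem_Ico.1 (mem_filter.1 hs).1).2

lemma le_lastCap (hs : 1 ≤ s) (hst : s < t) (hc : P.IsCapture y z j s) :
    s ≤ P.lastCap y z j t :=
  le_sup (f := id) (mem_filter.2 ⟨mem_Ico.2 ⟨hs, hst⟩, hc⟩)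

lemma lastCap_mem (h : P.lastCap y z j t ≠ 0) :
    P.lastCap y z j t ∈ (Ico 1 t).filter fun s => P.IsCapture y z j s := by
  have hne : ((Ico 1 t).filter fun s => P.IsCapture y z j s).Nonempty := by
    rw [nonempty_iff_ne_empty]
    rintro hempty
    exact h (by rw [lastCap, hempty, sup_empty]; rfl)
  obtain ⟨b, hb, hsup⟩ := exists_mem_eq_sup _ hne id
  rwa [lastCap, hsup]

lemma lastCap_zero_le : P.lastCap (fun _ _ => 0) z j t ≤ P.lastCap y z j t :=
  sup_mono (monotone_filter_right _ fun _ _ => IsCapture.of_zero_left)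

lemma exists_leader_open_iff_le_lastCap (ht : t ≤ P.T)
    (hs : P.lastCap (fun _ _ => 0) z j t < s) :
    (∃ p ∈ Ico s t ×ˢ P.considered j, y p.2 p.1 = 1) ↔ s ≤ P.lastCap y z j t := by
  constructor
  · rintro ⟨⟨s', k⟩, hp, hyk⟩
    obtain ⟨hs', hk⟩ := mem_product.1 hp
    obtain ⟨hss', hs't⟩ := mem_Ico.1 hs'
    have hcap : P.IsCapture y z j s' :=
      ⟨by omega, by omega, k, mem_captureSet.2 ⟨mem_considered.1 hk, Or.inl hyk⟩⟩
    exact hss'.trans (le_lastCap (by omega) hs't hcap)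
  · intro hsl
    have hne : P.lastCap y z j t ≠ 0 := by omega
    obtain ⟨hmem, -, -, k, hk⟩ := mem_filter.1 (lastCap_mem hne)
    obtain ⟨hk0, hyz⟩ := mem_captureSet.1 hk
    obtain ⟨h1, hlt⟩ := mem_Ico.1 hmem
    refine ⟨(P.lastCap y z j t, k), mem_product.2 ⟨mem_Ico.2 ⟨hsl, hlt⟩,
      mem_considered.2 hk0⟩, hyz.resolve_right fun hzk => ?_⟩
    have hcap : P.IsCapture (fun _ _ => 0) z j (P.lastCap y z j t) :=
      ⟨h1, by omega, k, mem_captureSet.2 ⟨hk0, Or.inr hzk⟩⟩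
    have := le_lastCap h1 hlt hcap
    omega

lemma isPatron_iff [IsStrictTotalOrder (Option I) (P.pref j)] (hz : P.IsSched z)
    (h1 : 1 ≤ t) (h2 : t ≤ P.T) (hi : i ∈ P.considered j) (hzi : z i t = 1) :
    P.IsPatron y z j t i ↔ ¬ ∃ k, P.pref j (some k) (some i) ∧ y k t = 1 := by
  constructor
  · rintro ⟨-, hmax⟩ ⟨k, hki, hyk⟩
    have hk : k ∈ P.captureSet y z j t :=
      mem_captureSet.2 ⟨_root_.trans_of _ hki (mem_considered.1 hi), Or.inl hyk⟩
    have hne : k ≠ i := by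
      rintro rfl
      exact irrefl_of _ _ hki
    exact asymm_of _ hki (hmax k hk hne)
  · intro hnb
    refine ⟨mem_captureSet.2 ⟨mem_considered.1 hi, Or.inr hzi⟩, fun k hk hne => ?_⟩
    obtain ⟨-, hyk | hzk⟩ := mem_captureSet.1 hk
    · rcases trichotomous_of (P.pref j) (some i) (some k) with h | h | h
      · exact h
      · exact absurd (Option.some.inj h).symm hne
      · exact absurd ⟨k, h, hyk⟩ hnb
    · exact absurd (hz.eq_of_apply_eq_one h1 h2 hzk hzi) hne

lemma v_eq_zero_of_ne_one (hzi : z i t ≠ 1) (ℓ : ℕ) : P.v y z j i ℓ t = 0 :=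
  if_neg fun h => hzi h.2.2.2

lemma v_of_follower_open [IsStrictTotalOrder (Option I) (P.pref j)] (hz : P.IsSched z)
    (h1 : 1 ≤ t) (h2 : t ≤ P.T) (hi : i ∈ P.considered j) (hzi : z i t = 1) (ℓ : ℕ) :
    P.v y z j i ℓ t =
      if ℓ = P.lastCap y z j t ∧ ¬ ∃ k, P.pref j (some k) (some i) ∧ y k t = 1
      then 1 - P.ρ * y i t else 0 := by
  have hcap : P.IsCapture y z j t :=
    ⟨h1, h2, i, mem_captureSet.2 ⟨mem_considered.1 hi, Or.inr hzi⟩⟩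
  simp only [v, isPatron_iff hz h1 h2 hi hzi, hcap, hzi, true_and, and_true]

lemma oMax_eq_ite (hy : P.IsSched y) (hs : 1 ≤ s) (hst : s ≤ t) (ht : t ≤ P.T) :
    P.oMax y j i s t = if (∃ p ∈ Ico s t ×ˢ P.considered j, y p.2 p.1 = 1) ∨
      ∃ k, P.pref j (some k) (some i) ∧ y k t = 1 then 1 else 0 := by
  rw [oMax, fold_max_zero_eq_ite, fold_max_zero_eq_ite, max_ite_one_zero]
  · simp only [mem_filter, mem_univ, true_and]
  · exact fun k _ => (hy t (by omega) ht).1 k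
  · intro p hp
    obtain ⟨hp1, hp2⟩ := mem_Ico.1 (mem_product.1 hp).1
    exact (hy p.1 (by omega) (by omega)).1 p.2

/-- `1 - o^{st}` is the indicator that the demand of `j` spawned at `s` is still
uncaptured by the leader when the follower's `i` captures it at `t`. -/
lemma sum_d_mul_one_sub_oMax (hy : P.IsSched y) (ht : t ≤ P.T) :
    ∑ s ∈ Icc (P.lastCap (fun _ _ => 0) z j t + 1) t, P.d j s * (1 - P.oMax y j i s t) =
      if ∃ k, P.pref j (some k) (some i) ∧ y k t = 1 then 0
      else P.D j (P.lastCap y z j t) t := by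
  have hoMax : ∀ s ∈ Icc (P.lastCap (fun _ _ => 0) z j t + 1) t, P.oMax y j i s t =
      if s ≤ P.lastCap y z j t ∨ ∃ k, P.pref j (some k) (some i) ∧ y k t = 1
      then 1 else 0 := by
    intro s hs
    obtain ⟨hs1, hs2⟩ := mem_Icc.1 hs
    simp only [oMax_eq_ite hy (by omega) hs2 ht,
      exists_leader_open_iff_le_lastCap (y := y) (z := z) (j := j) (s := s) ht (by omega)]
  rw [sum_congr rfl fun s hs => by rw [hoMax s hs]]
  split_ifs with hb
  · simp [hb]
  · have hle : P.lastCap (fun _ _ => 0) z j t ≤ P.lastCap y z j t := lastCap_zero_le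
    have hfilter : (Icc (P.lastCap (fun _ _ => 0) z j t + 1) t).filter
        (fun s => ¬ s ≤ P.lastCap y z j t) = Icc (P.lastCap y z j t + 1) t := by
      ext s
      simp only [mem_filter, mem_Icc]
      omega
    rw [D, ← hfilter, sum_filter]
    refine sum_congr rfl fun s _ => ?_
    by_cases hs : s ≤ P.lastCap y z j t <;> simp [hs, hb]

lemma sum_tightened_term_eq [IsStrictTotalOrder (Option I) (P.pref j)] (hz : P.IsSched z)
    (hy : P.IsSched y) (h1 : 1 ≤ t) (h2 : t ≤ P.T) (hi : i ∈ P.considered j) :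
    ∑ ℓ ∈ range t, P.r i * P.v (fun _ _ => 0) z j i ℓ t *
        (P.D j ℓ t - (∑ s ∈ Icc (ℓ + 1) t, P.d j s * P.oMax y j i s t)
          - P.ρ * y i t * ∑ s ∈ Icc (ℓ + 1) t, P.d j s * (1 - P.oMax y j i s t)) =
      ∑ ℓ ∈ range t, P.r i * P.D j ℓ t * P.v y z j i ℓ t := by
  by_cases hzi : z i t = 1
  swap
  · simp [v_eq_zero_of_ne_one hzi]
  have hv0 (ℓ : ℕ) : P.v (fun _ _ => 0) z j i ℓ t =
      if ℓ = P.lastCap (fun _ _ => 0) z j t then 1 else 0 := by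
    simp [v_of_follower_open hz h1 h2 hi hzi]
  have hsum_oMax :
      ∑ s ∈ Icc (P.lastCap (fun _ _ => 0) z j t + 1) t, P.d j s * P.oMax y j i s t =
      P.D j (P.lastCap (fun _ _ => 0) z j t) t -
        ∑ s ∈ Icc (P.lastCap (fun _ _ => 0) z j t + 1) t, P.d j s * (1 - P.oMax y j i s t) := by
    simp [D, mul_sub, sum_sub_distrib]
  simp only [hv0, v_of_follower_open hz h1 h2 hi hzi, mul_ite, ite_mul, mul_zero, zero_mul,
    mul_one]
  rw [sum_ite_eq', if_pos (mem_range.2 (lastCap_lt h1)), hsum_oMax,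
    sum_d_mul_one_sub_oMax hy h2]
  by_cases hb : ∃ k, P.pref j (some k) (some i) ∧ y k t = 1
  · simp [hb]
  · simp only [hb, if_false, not_false_eq_true, and_true, sum_ite_eq', mem_range, lastCap_lt h1,
      if_true]
    ring

end CDFLP

namespace CDFLP

variable {I J : Type*} [Fintype I] [Fintype J]

/-- **Tightness of the tightened bound.**  For every follower schedule `zs` and every
leader schedule `y`, the tightened value-function bound of `zs` evaluated at `y`
equals the follower's profit with schedule `zs` against `y`. -/
theorem tightened_bound_tight (P : CDFLP I J) (hP : P.Valid)
    (zs : I → ℕ → ℝ) (hzs : P.IsSched zs)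
    (y : I → ℕ → ℝ) (hy : P.IsSched y) :
    P.tightenedBound zs y = P.profitF y zs := by
  refine sum_congr rfl fun t ht => ?_
  obtain ⟨h1, h2⟩ := mem_Icc.1 ht
  rw [sum_comm]
  conv_rhs => rw [sum_comm]
  refine sum_congr rfl fun j _ => ?_
  rw [sum_comm]
  conv_rhs => rw [sum_comm]
  refine sum_congr rfl fun i hi => ?_
  have := hP.2.2.2.2.2 j
  exact sum_tightened_term_eq hzs hy h1 h2 hi

end CDFLP
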